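/- The polynomial x0^9 − x2^6·x3^3 + x2^3·x3^6 is irreducible in the polynomial ring ℂ[x0, x2, x3]. (This is the polynomial defining, together with x1 = 0, the curve D1, an irreducible component of S1 ∩ S2.) -/
import Mathlib

open MvPolynomial

section Aux

local notation "R" => MvPolynomial (Fin 2) ℂ
local notation "K" => FractionRing (MvPolynomial (Fin 2) ℂ)

noncomputable def aAux : MvPolynomial (Fin 2) ℂ :=
  X 0 ^ 6 * X 1 ^ 3 - X 0 ^ 3 * X 1 ^ 6

open Polynomial in
lemma aAux_not_cube (r : MvPolynomial (Fin 2) ℂ) : r ^ 3 ≠ aAux := by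
  intro h
  have hφ := congrArg (MvPolynomial.aeval ![(Polynomial.X : ℂ[X]), 1]) h
  rw [map_pow] at hφ
  set c : ℂ[X] := MvPolynomial.aeval ![(Polynomial.X : ℂ[X]), 1] r with hc
  have ha : MvPolynomial.aeval ![(Polynomial.X : ℂ[X]), 1] aAux
      = (Polynomial.X - Polynomial.C 1) * (Polynomial.X ^ 5 + Polynomial.X ^ 4 + Polynomial.X ^ 3) := by
    simp [aAux]
    ring
  rw [ha] at hφ
  have hg0 : (Polynomial.X ^ 5 + Polynomial.X ^ 4 + Polynomial.X ^ 3 : ℂ[X]) ≠ 0 := by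
    intro h0
    have := congrArg (Polynomial.eval 1) h0
    norm_num at this
  have hne : ((Polynomial.X - Polynomial.C 1) *
      (Polynomial.X ^ 5 + Polynomial.X ^ 4 + Polynomial.X ^ 3) : ℂ[X]) ≠ 0 :=
    mul_ne_zero (Polynomial.X_sub_C_ne_zero 1) hg0
  have hrm : Polynomial.rootMultiplicity 1 ((Polynomial.X - Polynomial.C 1) *
      (Polynomial.X ^ 5 + Polynomial.X ^ 4 + Polynomial.X ^ 3) : ℂ[X]) = 1 := by
    rw [Polynomial.rootMultiplicity_mul hne, Polynomial.rootMultiplicity_X_sub_C_self,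
      Polynomial.rootMultiplicity_eq_zero (by norm_num [Polynomial.IsRoot])]
  have hcne : c ≠ 0 := by
    intro h0
    rw [h0, zero_pow (by norm_num : (3:ℕ) ≠ 0)] at hφ
    exact hne hφ.symm
  have h3 : Polynomial.rootMultiplicity 1 (c ^ 3) = 3 * Polynomial.rootMultiplicity 1 c := by
    have h1 : c ^ 3 = c * c * c := by ring
    rw [h1, Polynomial.rootMultiplicity_mul (mul_ne_zero (mul_ne_zero hcne hcne) hcne),
      Polynomial.rootMultiplicity_mul (mul_ne_zero hcne hcne)]
    ring
  rw [hφ, hrm] at h3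
  omega

open Polynomial in
lemma no_cube_K (b : K) : b ^ 3 ≠ algebraMap (MvPolynomial (Fin 2) ℂ) K aAux := by
  intro hb
  have hint : IsIntegral (MvPolynomial (Fin 2) ℂ) b := by
    refine ⟨Polynomial.X ^ 3 - Polynomial.C aAux, Polynomial.monic_X_pow_sub_C _ (by norm_num), ?_⟩
    simp [Polynomial.eval₂_sub, hb]
  obtain ⟨r, hr⟩ := IsIntegrallyClosed.isIntegral_iff.mp hint
  apply aAux_not_cube r
  apply IsFractionRing.injective (MvPolynomial (Fin 2) ℂ) K
  rw [map_pow, hr, hb]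

end Aux

/-- The polynomial `x0⁹ − x2⁶x3³ + x2³x3⁶` defining (together with `x1 = 0`) the curve
`D1`, an irreducible component of `S1 ∩ S2`, is irreducible in `ℂ[x0, x2, x3]`
(variables `x0 = X 0`, `x2 = X 1`, `x3 = X 2`). -/
theorem stmt_7 :
    Irreducible (X 0 ^ 9 - X 1 ^ 6 * X 2 ^ 3 + X 1 ^ 3 * X 2 ^ 6 :
      MvPolynomial (Fin 3) ℂ) := by
  rw [← MulEquiv.irreducible_iff (F := MvPolynomial (Fin 3) ℂ ≃+* Polynomial (MvPolynomial (Fin 2) ℂ)) (finSuccEquiv ℂ 2).toRingEquiv]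
  have himg : (finSuccEquiv ℂ 2).toRingEquiv
      (X 0 ^ 9 - X 1 ^ 6 * X 2 ^ 3 + X 1 ^ 3 * X 2 ^ 6)
      = Polynomial.X ^ 3 ^ 2 - Polynomial.C aAux := by
    have key : ∀ p : MvPolynomial (Fin 3) ℂ,
        (finSuccEquiv ℂ 2).toRingEquiv p = finSuccEquiv ℂ 2 p := fun _ => rfl
    simp only [key]
    have h1 : (1 : Fin 3) = (0 : Fin 2).succ := rfl
    have h2 : (2 : Fin 3) = (1 : Fin 2).succ := rfl
    simp only [map_add, map_sub, map_mul, map_pow, h1, h2]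
    simp only [finSuccEquiv_X_zero, finSuccEquiv_X_succ, aAux, map_sub, map_mul, map_pow]
    ring
  rw [himg]
  have hmonic : (Polynomial.X ^ 3 ^ 2 - Polynomial.C aAux).Monic :=
    Polynomial.monic_X_pow_sub_C _ (by norm_num)
  rw [hmonic.irreducible_iff_irreducible_map_fraction_map (K := FractionRing (MvPolynomial (Fin 2) ℂ))]
  rw [Polynomial.map_sub, Polynomial.map_pow, Polynomial.map_X, Polynomial.map_C]
  rw [X_pow_sub_C_irreducible_iff_of_prime_pow (Nat.prime_three) (by norm_num) (by norm_num)]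
  exact no_cube_K
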